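/- arXiv:2111.06351 — 3 statements merged into one kernel-verified Lean document; each statement's English description precedes it below -/
import Mathlib

section
/- Let ζ be a finite nonempty set of lattice points in ℤ^N. Then 0 lies in the interior of the corner hull Corner(ζ) := Conv(ζ) + ℝ^N_{≥0} if and only if there is no nonzero lattice point r in the nonnegative orthant of the dual lattice such that r(w) ≥ 0 for all w ∈ ζ. -/
/-!
Separation: if `0` is not interior to the convex set `Conv(ζ) + ℝ^N_{≥0}`, whose interior is
nonempty, a nonzero linear functional is nonnegative on it, and since the set is stable under
adding the orthant, the functional has nonnegative coefficients. Conversely such a functional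
rules out a neighbourhood of `0`.

It remains to pass from a real to an integer functional. Write the real solution `r` as
`∑ tᵢ Cᵢ` with rational vectors `Cᵢ` and reals `tᵢ` linearly independent over `ℚ`. Replacing `t`
by a nearby rational vector keeps every integer form `r ↦ r ⬝ w` that vanishes at `r` zero (by
independence) and every other one of the same sign (by continuity); clearing denominators then
gives an integer vector with the same sign pattern.
-/

open Pointwise Matrix Set Filter Topology

section RationalApproximation

variable {n ι : Type*} [Fintype n]

theorem exists_linearIndependent_vecMul_eq (r : n → ℝ) :
    ∃ (d : ℕ) (t : Fin d → ℝ) (C : Matrix (Fin d) n ℚ),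
      LinearIndependent ℚ t ∧ r = t ᵥ* C.map (↑) := by
  let V := Submodule.span ℚ (range r)
  have hr : ∀ l, r l ∈ V := fun l => Submodule.subset_span (mem_range_self l)
  have : FiniteDimensional ℚ V := FiniteDimensional.span_of_finite ℚ (finite_range r)
  let b := Module.finBasis ℚ V
  refine ⟨_, fun i => b i, .of fun i l => b.repr ⟨r l, hr l⟩ i,
    b.linearIndependent.map' V.subtype V.ker_subtype, funext fun l => ?_⟩
  have := congrArg Subtype.val (b.sum_repr ⟨r l, hr l⟩)
  simp only [Submodule.coe_sum, Submodule.coe_smul, Rat.smul_def] at this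
  rw [vecMul, dotProduct]
  conv_lhs => rw [← this]
  simp only [map_apply, of_apply, mul_comm]

theorem sign_eq_sign_of_mul_pos {R : Type*} [Ring R] [LinearOrder R] [IsStrictOrderedRing R]
    {x y : R} (h : 0 < x * y) : SignType.sign x = SignType.sign y := by
  rcases pos_and_pos_or_neg_and_neg_of_mul_pos h with ⟨hx, hy⟩ | ⟨hx, hy⟩
  · rw [sign_pos hx, sign_pos hy]
  · rw [sign_neg hx, sign_neg hy]

theorem exists_rat_sign_dotProduct_eq [Finite ι] (a : ι → n → ℚ) (r : n → ℝ) :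
    ∃ ρ : n → ℚ, ∀ j, SignType.sign (ρ ⬝ᵥ a j) = SignType.sign (r ⬝ᵥ fun l => (a j l : ℝ)) := by
  obtain ⟨d, t, C, ht, rfl⟩ := exists_linearIndependent_vecMul_eq r
  let c : ι → Fin d → ℝ := fun j i => ((C *ᵥ a j) i : ℚ)
  have hc : ∀ j, (t ᵥ* C.map (↑) ⬝ᵥ fun l => (a j l : ℝ)) = t ⬝ᵥ c j := by
    intro j
    rw [← dotProduct_mulVec]
    congr 1
    funext i
    exact ((Rat.castHom ℝ).map_mulVec C (a j) i).symm
  have hnear : ∀ᶠ p in 𝓝 t, ∀ j, t ⬝ᵥ c j ≠ 0 → 0 < (t ⬝ᵥ c j) * (p ⬝ᵥ c j) := by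
    refine eventually_all.2 fun j => ?_
    by_cases h : t ⬝ᵥ c j = 0
    · exact .of_forall fun _ h' => absurd h h'
    have hcont : Continuous fun p : Fin d → ℝ => (t ⬝ᵥ c j) * (p ⬝ᵥ c j) := by fun_prop
    exact (hcont.tendsto t).eventually_const_lt (mul_self_pos.2 h) |>.mono fun _ hp _ => hp
  obtain ⟨_, ⟨q, rfl⟩, hq⟩ :=
    (DenseRange.piMap fun _ => Rat.denseRange_cast (𝕜 := ℝ)).inter_nhds_nonempty hnear
  refine ⟨q ᵥ* C, fun j => ?_⟩
  rw [hc, ← dotProduct_mulVec]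
  by_cases h : t ⬝ᵥ c j = 0
  · have hcj : C *ᵥ a j = 0 := by
      funext i
      refine Fintype.linearIndependent_iff.1 ht _ ?_ i
      simpa only [dotProduct, Rat.smul_def, mul_comm] using h
    rw [h, hcj, dotProduct_zero, sign_zero, sign_zero]
  · rw [← (Rat.cast_strictMono (K := ℝ)).sign_comp (f := Rat.castHom ℝ), RingHom.map_dotProduct]
    exact (sign_eq_sign_of_mul_pos (hq j h)).symm

theorem exists_pos_nat_mul_eq_intCast (ρ : n → ℚ) :
    ∃ D : ℕ, 0 < D ∧ ∃ z : n → ℤ, ∀ l, (z l : ℚ) = D * ρ l := by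
  classical
  refine ⟨∏ l, (ρ l).den, Finset.prod_pos fun l _ => (ρ l).pos,
    fun l => (ρ l).num * ((∏ l', (ρ l').den) / (ρ l).den : ℕ), fun l => ?_⟩
  have hdvd : (ρ l).den ∣ ∏ l', (ρ l').den := Finset.dvd_prod_of_mem _ (Finset.mem_univ l)
  rw [Int.cast_mul, Int.cast_natCast, Nat.cast_div hdvd (by exact_mod_cast (ρ l).den_nz),
    ← Rat.mul_den_eq_num]
  field_simp

theorem exists_int_sign_dotProduct_eq [Finite ι] (a : ι → n → ℤ) (r : n → ℝ) :
    ∃ z : n → ℤ, ∀ j, SignType.sign (z ⬝ᵥ a j) = SignType.sign (r ⬝ᵥ fun l => (a j l : ℝ)) := by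
  obtain ⟨ρ, hρ⟩ := exists_rat_sign_dotProduct_eq (fun j l => (a j l : ℚ)) r
  obtain ⟨D, hD, z, hz⟩ := exists_pos_nat_mul_eq_intCast ρ
  refine ⟨z, fun j => ?_⟩
  have hcast : ((z ⬝ᵥ a j : ℤ) : ℚ) = D * (ρ ⬝ᵥ fun l => (a j l : ℚ)) := by
    simp only [dotProduct, Int.cast_sum, Int.cast_mul, hz, Finset.mul_sum, mul_assoc]
  simpa [← sign_intCast (α := ℚ) (z ⬝ᵥ a j), hcast, sign_mul, sign_pos (Nat.cast_pos.2 hD)]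
    using hρ j

end RationalApproximation

theorem Convex.exists_forall_le_of_notMem_interior {E : Type*} [AddCommGroup E] [Module ℝ E]
    [TopologicalSpace E] [IsTopologicalAddGroup E] [ContinuousSMul ℝ E] {C : Set E} {x : E}
    (hC : Convex ℝ C) (hne : (interior C).Nonempty) (hx : x ∉ interior C) :
    ∃ f : StrongDual ℝ E, f ≠ 0 ∧ ∀ y ∈ C, f y ≤ f x := by
  obtain ⟨f, hf⟩ := geometric_hahn_banach_open_point hC.interior isOpen_interior hx
  refine ⟨f, ?_, fun y hy => ?_⟩
  · rintro rfl
    obtain ⟨y, hy⟩ := hne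
    simpa using hf y hy
  · have hcl : closure (interior C) ⊆ {y | f y ≤ f x} :=
      closure_minimal (fun y hy => (hf y hy).le) (isClosed_le f.continuous continuous_const)
    rw [hC.closure_interior_eq_closure_of_nonempty_interior hne] at hcl
    exact hcl (subset_closure hy)

section Corner

variable {n : Type*}

def cornerHull (S : Set (n → ℝ)) : Set (n → ℝ) := convexHull ℝ S + Ici 0

theorem convex_cornerHull (S : Set (n → ℝ)) : Convex ℝ (cornerHull S) :=
  (convex_convexHull ℝ S).add (convex_Ici 0)

theorem Ici_subset_cornerHull {S : Set (n → ℝ)} {w : n → ℝ} (hw : w ∈ S) :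
    Ici w ⊆ cornerHull S :=
  fun x hx => ⟨w, subset_convexHull ℝ S hw, x - w, mem_Ici.2 (sub_nonneg.2 hx), add_sub_cancel w x⟩

variable [Fintype n]

theorem eq_zero_of_forall_mem_nhds_dotProduct_nonneg {r : n → ℝ} {s : Set (n → ℝ)}
    (hs : s ∈ 𝓝 0) (h : ∀ x ∈ s, 0 ≤ r ⬝ᵥ x) : r = 0 := by
  have hlim : Tendsto (fun t : ℝ => -t • r) (𝓝[>] 0) (𝓝 0) :=
    ((continuous_neg.smul continuous_const).tendsto' 0 0 (by simp)).mono_left nhdsWithin_le_nhds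
  obtain ⟨t, hts, ht⟩ := ((hlim.eventually hs).and self_mem_nhdsWithin).exists
  have hrr : 0 ≤ -t * (r ⬝ᵥ r) := by simpa only [dotProduct_smul, smul_eq_mul] using h _ hts
  refine dotProduct_self_eq_zero.1 (le_antisymm ?_ (Finset.sum_nonneg fun i _ => mul_self_nonneg _))
  nlinarith

theorem nonneg_of_forall_Ici_dotProduct_nonneg {r w : n → ℝ} (h : ∀ x ∈ Ici w, 0 ≤ r ⬝ᵥ x) :
    0 ≤ r := by
  classical
  intro l
  by_contra! hl
  change r l < 0 at hl
  have hw := h w self_mem_Ici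
  have ht : 0 ≤ (r ⬝ᵥ w + 1) / -r l := div_nonneg (by linarith) (by linarith)
  have hx := h (w + ((r ⬝ᵥ w + 1) / -r l) • Pi.single l 1)
    (mem_Ici.2 (le_add_of_nonneg_right (smul_nonneg ht (Pi.single_nonneg.2 zero_le_one))))
  rw [dotProduct_add, dotProduct_smul, dotProduct_single, smul_eq_mul, mul_one,
    div_mul_eq_mul_div, div_neg, mul_div_cancel_right₀ _ hl.ne] at hx
  linarith

theorem interior_cornerHull_nonempty {S : Set (n → ℝ)} (hS : S.Nonempty) :
    (interior (cornerHull S)).Nonempty := by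
  obtain ⟨w, hw⟩ := hS
  refine ⟨w + 1, interior_mono (Ici_subset_cornerHull hw) ?_⟩
  rw [← pi_univ_Ici, interior_pi_set finite_univ]
  simp

theorem dotProduct_nonneg_of_mem_cornerHull {S : Set (n → ℝ)} {r x : n → ℝ} (hr : 0 ≤ r)
    (hS : ∀ w ∈ S, 0 ≤ r ⬝ᵥ w) (hx : x ∈ cornerHull S) : 0 ≤ r ⬝ᵥ x := by
  obtain ⟨y, hy, z, hz, rfl⟩ := hx
  have hhalf : Convex ℝ {x | 0 ≤ r ⬝ᵥ x} :=
    convex_halfSpace_ge ⟨dotProduct_add r, fun c x => dotProduct_smul c r x⟩ 0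
  rw [dotProduct_add]
  exact add_nonneg (convexHull_min hS hhalf hy) (dotProduct_nonneg_of_nonneg hr hz)

theorem exists_dotProduct_nonneg_of_zero_notMem_interior {S : Set (n → ℝ)} (hS : S.Nonempty)
    (h0 : 0 ∉ interior (cornerHull S)) :
    ∃ r : n → ℝ, 0 ≤ r ∧ r ≠ 0 ∧ ∀ x ∈ cornerHull S, 0 ≤ r ⬝ᵥ x := by
  classical
  obtain ⟨f, hf0, hf⟩ := (convex_cornerHull S).exists_forall_le_of_notMem_interior
    (interior_cornerHull_nonempty hS) h0
  set r := -(dotProductEquiv ℝ n).symm f.toLinearMap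
  have hr : ∀ x, r ⬝ᵥ x = -f x := by
    intro x
    rw [neg_dotProduct]
    congr 1
    exact LinearMap.congr_fun ((dotProductEquiv ℝ n).apply_symm_apply _) x
  have hC : ∀ x ∈ cornerHull S, 0 ≤ r ⬝ᵥ x := fun x hx => by simpa [hr] using hf x hx
  obtain ⟨w, hw⟩ := hS
  refine ⟨r, nonneg_of_forall_Ici_dotProduct_nonneg fun x hx => hC x (Ici_subset_cornerHull hw hx),
    fun hr0 => hf0 ?_, hC⟩
  ext x
  simpa [hr0] using hr x

theorem zero_mem_interior_cornerHull_iff {S : Set (n → ℝ)} (hS : S.Nonempty) :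
    0 ∈ interior (cornerHull S) ↔ ¬ ∃ r : n → ℝ, 0 ≤ r ∧ r ≠ 0 ∧ ∀ w ∈ S, 0 ≤ r ⬝ᵥ w := by
  refine ⟨fun h0 ⟨r, hr, hr0, hrS⟩ => hr0 ?_, fun h => not_not.1 fun h0 => ?_⟩
  · exact eq_zero_of_forall_mem_nhds_dotProduct_nonneg (mem_interior_iff_mem_nhds.1 h0)
      fun x hx => dotProduct_nonneg_of_mem_cornerHull hr hrS hx
  · obtain ⟨r, hr, hr0, hrC⟩ := exists_dotProduct_nonneg_of_zero_notMem_interior hS h0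
    exact h ⟨r, hr, hr0, fun w hw => hrC w (Ici_subset_cornerHull hw self_mem_Ici)⟩

end Corner

theorem exists_int_dotProduct_nonneg_iff_real {n : Type*} [Fintype n] (ζ : Finset (n → ℤ)) :
    (∃ z : n → ℤ, 0 ≤ z ∧ z ≠ 0 ∧ ∀ w ∈ ζ, 0 ≤ z ⬝ᵥ w) ↔
      ∃ r : n → ℝ, 0 ≤ r ∧ r ≠ 0 ∧ ∀ w ∈ ζ, 0 ≤ r ⬝ᵥ fun l => (w l : ℝ) := by
  classical
  constructor
  · rintro ⟨z, hz, hz0, hzζ⟩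
    refine ⟨fun l => (z l : ℝ), fun l => Int.cast_nonneg (hz l),
      fun h => hz0 (funext fun l => Int.cast_eq_zero.1 (congrFun h l)), fun w hw => ?_⟩
    simp only [dotProduct]
    exact_mod_cast hzζ w hw
  · rintro ⟨r, hr, hr0, hrζ⟩
    obtain ⟨z, hz⟩ :=
      exists_int_sign_dotProduct_eq (Sum.elim (fun w : ζ => (w : n → ℤ)) fun l => Pi.single l 1) r
    have hcoord : ∀ l, SignType.sign (z l) = SignType.sign (r l) := fun l => by
      have hsingle : (fun l' => ((Pi.single l 1 : n → ℤ) l' : ℝ)) = Pi.single l 1 := by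
        ext l'
        simp [Pi.single_apply]
      simpa [hsingle, dotProduct_single] using hz (.inr l)
    refine ⟨z, fun l => ?_, fun hz0 => hr0 (funext fun l => ?_), fun w hw => ?_⟩
    · rw [Pi.zero_apply, ← sign_nonneg_iff, hcoord, sign_nonneg_iff]
      exact hr l
    · simpa [hz0] using (hcoord l).symm
    · have hzw : SignType.sign (z ⬝ᵥ w) = SignType.sign (r ⬝ᵥ fun l => (w l : ℝ)) :=
        hz (.inl ⟨w, hw⟩)
      rw [← sign_nonneg_iff, hzw, sign_nonneg_iff]
      exact hrζ w hw

theorem stmt1 (N : ℕ) (ζ : Finset (Fin N → ℤ)) (hζ : ζ.Nonempty) :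
    (0 : Fin N → ℝ) ∈
      interior (convexHull ℝ
          ((fun w : Fin N → ℤ => fun l => (w l : ℝ)) '' (ζ : Set (Fin N → ℤ))) +
        {x : Fin N → ℝ | ∀ l, 0 ≤ x l}) ↔
    ¬ ∃ r : Fin N → ℤ, (∀ l, 0 ≤ r l) ∧ r ≠ 0 ∧ ∀ w ∈ ζ, 0 ≤ ∑ l, r l * w l := by
  change 0 ∈ interior (cornerHull _) ↔ _
  rw [zero_mem_interior_cornerHull_iff ((Finset.coe_nonempty.2 hζ).image _), not_iff_not]
  simp only [forall_mem_image, Finset.mem_coe]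
  exact (exists_int_dotProduct_nonneg_iff_real ζ).symm
end

section
/- The number of distinct corner polyhedra of type A_N equals 2·C_{N+1} − 1, where C_{N+1} is the (N+1)-st Catalan number. Equivalently, the number of corner hulls of nonempty finite sets of vectors of the form e_i − e_j (i,j ∈ {1,…,N+1}, i = j allowed), projected to the sum-zero hyperplane, equals 2·C_{N+1} − 1. -/
/-!
A root `e_i - e_j` lies in `Corner(ζ)` exactly when the vector of partial sums of some root of `ζ`
is below its own. The partial-sum vectors of roots are `±` indicators of intervals, and when no
root of `ζ` is below, a suitable sum of partial sums is a linear functional that is larger on all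
of `ζ`, hence on its convex hull, than on `e_i - e_j`. So corner polyhedra correspond to nonempty
up-closed sets of roots for this preorder.

Such a set either consists of positive roots, and is then the complement of a family of intervals
closed under taking subintervals, or contains all nonnegative roots and the negative roots of
another such family. These families are in bijection with monotone inflationary self-maps of
`{0, …, N}`, and splitting such a map at its first fixed point gives the Catalan recursion. This
yields `C_{N+1} - 1` polyhedra of the first kind and `C_{N+1}` of the second.
-/

open Pointwise

def sfun (N : ℕ) (k : Fin N) (w : Fin (N + 1) → ℝ) : ℝ :=
  ∑ l ∈ Finset.univ.filter (fun l : Fin (N + 1) => (l : ℕ) ≤ (k : ℕ)), w l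

def rootVec (N : ℕ) (i j : Fin (N + 1)) : Fin (N + 1) → ℝ :=
  Pi.single i 1 - Pi.single j 1

def Oplus (N : ℕ) : Set (Fin (N + 1) → ℝ) :=
  {w | (∑ l, w l = 0) ∧ ∀ k : Fin N, 0 ≤ sfun N k w}

def Outweighs (N : ℕ) (p q : Fin (N + 1) × Fin (N + 1)) : Prop :=
  rootVec N q.1 q.2 ≠ rootVec N p.1 p.2 ∧
  ∃ o : Fin (N + 1) → ℝ, o ∈ Oplus N ∧ rootVec N q.1 q.2 = rootVec N p.1 p.2 + o

open Finset

def IsSignedIndicator {K : Type*} (v : K → ℤ) : Prop :=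
  (∀ k, v k = 0 ∨ v k = 1) ∨ (∀ k, v k = 0 ∨ v k = -1)

theorem IsSignedIndicator.exists_sum_lt_sum {K : Type*} [Fintype K] {S : Set (K → ℤ)}
    {v : K → ℤ} (hv : IsSignedIndicator v) (hS : ∀ u ∈ S, IsSignedIndicator u)
    (h : ∀ u ∈ S, ¬ u ≤ v) :
    ∃ A : Finset K, ∀ u ∈ S, ∑ k ∈ A, v k < ∑ k ∈ A, u k := by
  classical
  suffices ∃ A : Finset K, ∀ u ∈ S, (∀ k ∈ A, v k ≤ u k) ∧ ∃ k ∈ A, v k < u k by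
    obtain ⟨A, hA⟩ := this
    exact ⟨A, fun u hu => sum_lt_sum (hA u hu).1 (hA u hu).2⟩
  by_cases hneg : ∃ k₀, v k₀ < 0
  · obtain ⟨k₀, hk₀⟩ := hneg
    refine ⟨univ.filter (v · < 0), fun u hu => ?_⟩
    obtain ⟨k₁, hk₁⟩ : ∃ k, v k < u k := by simpa [Pi.le_def] using h u hu
    simp only [mem_filter, mem_univ, true_and]
    rcases hv with hv | hv
    · have := hv k₀; omega
    rcases hS u hu with hu' | hu'
    · refine ⟨fun k _ => ?_, k₀, hk₀, ?_⟩ <;> grind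
    · refine ⟨fun k _ => ?_, k₁, ?_, hk₁⟩ <;> grind
  · push Not at hneg
    refine ⟨univ.filter (v · = 0), fun u hu => ?_⟩
    obtain ⟨k₁, hk₁⟩ : ∃ k, v k < u k := by simpa [Pi.le_def] using h u hu
    simp only [mem_filter, mem_univ, true_and]
    rcases hS u hu with hu' | hu'
    · refine ⟨fun k _ => ?_, k₁, ?_, hk₁⟩ <;> grind
    · exact absurd (fun k => by grind) (h u hu)

section CornerPolyhedra

variable {N : ℕ}

def sfunLinear (k : Fin N) : (Fin (N + 1) → ℝ) →ₗ[ℝ] ℝ :=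
  ∑ l ∈ univ.filter (fun l : Fin (N + 1) => (l : ℕ) ≤ (k : ℕ)), LinearMap.proj l

@[simp] lemma sfunLinear_apply (k : Fin N) (w : Fin (N + 1) → ℝ) :
    sfunLinear k w = sfun N k w := by
  simp [sfunLinear, sfun]

lemma add_mem_Oplus {o o' : Fin (N + 1) → ℝ} (ho : o ∈ Oplus N) (ho' : o' ∈ Oplus N) :
    o + o' ∈ Oplus N := by
  refine ⟨by simp [sum_add_distrib, ho.1, ho'.1], fun k => ?_⟩
  rw [← sfunLinear_apply, map_add, sfunLinear_apply, sfunLinear_apply]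
  exact add_nonneg (ho.2 k) (ho'.2 k)

lemma convex_Oplus : Convex ℝ (Oplus N) := by
  intro o ho o' ho' a b ha hb _
  refine ⟨by simp [sum_add_distrib, ← mul_sum, ho.1, ho'.1], fun k => ?_⟩
  rw [← sfunLinear_apply, map_add, map_smul, map_smul, smul_eq_mul, smul_eq_mul,
    sfunLinear_apply, sfunLinear_apply]
  exact add_nonneg (mul_nonneg ha (ho.2 k)) (mul_nonneg hb (ho'.2 k))

def rootSums (p : Fin (N + 1) × Fin (N + 1)) (k : Fin N) : ℤ :=
  (if (p.1 : ℕ) ≤ k then 1 else 0) - (if (p.2 : ℕ) ≤ k then 1 else 0)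

lemma sfun_rootVec (p : Fin (N + 1) × Fin (N + 1)) (k : Fin N) :
    sfun N k (rootVec N p.1 p.2) = rootSums p k := by
  simp only [sfun, rootVec, rootSums, Pi.sub_apply, sum_sub_distrib, Pi.single_apply, sum_ite_eq',
    mem_filter, mem_univ, true_and]
  push_cast
  rfl

lemma sum_rootVec (i j : Fin (N + 1)) : ∑ l, rootVec N i j l = 0 := by
  simp [rootVec, sum_sub_distrib]

lemma isSignedIndicator_rootSums (p : Fin (N + 1) × Fin (N + 1)) :
    IsSignedIndicator (rootSums p) := by
  unfold IsSignedIndicator rootSums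
  rcases le_total (p.1 : ℕ) p.2 with h | h
  · left; intro k; split_ifs <;> omega
  · right; intro k; split_ifs <;> omega

def corner (ζ : Finset (Fin (N + 1) × Fin (N + 1))) : Set (Fin (N + 1) → ℝ) :=
  convexHull ℝ ((fun p : Fin (N + 1) × Fin (N + 1) => rootVec N p.1 p.2) '' ↑ζ) + Oplus N

lemma rootVec_mem_corner_of_rootSums_le {ζ : Finset (Fin (N + 1) × Fin (N + 1))}
    {p q : Fin (N + 1) × Fin (N + 1)} (hp : p ∈ ζ) (hpq : rootSums p ≤ rootSums q) :
    rootVec N q.1 q.2 ∈ corner ζ := by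
  refine ⟨_, subset_convexHull ℝ _ ⟨p, hp, rfl⟩, rootVec N q.1 q.2 - rootVec N p.1 p.2,
    ⟨?_, fun k => ?_⟩, add_sub_cancel _ _⟩
  · simp [sum_sub_distrib, sum_rootVec]
  · rw [← sfunLinear_apply, map_sub, sfunLinear_apply, sfunLinear_apply, sfun_rootVec,
      sfun_rootVec, sub_nonneg]
    exact_mod_cast hpq k

lemma rootVec_notMem_corner_of_sum_lt {ζ : Finset (Fin (N + 1) × Fin (N + 1))}
    {q : Fin (N + 1) × Fin (N + 1)} (A : Finset (Fin N))
    (h : ∀ p ∈ ζ, ∑ k ∈ A, rootSums q k < ∑ k ∈ A, rootSums p k) :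
    rootVec N q.1 q.2 ∉ corner ζ := by
  rintro ⟨x, hx, o, ho, hxo⟩
  set φ := ∑ k ∈ A, sfunLinear (N := N) k
  have hφ (p : Fin (N + 1) × Fin (N + 1)) :
      φ (rootVec N p.1 p.2) = ∑ k ∈ A, (rootSums p k : ℝ) := by
    simp [φ, LinearMap.sum_apply, sfun_rootVec]
  have hx_le : φ x ≤ ∑ k ∈ A, (rootSums q k : ℝ) := by
    have ho' : 0 ≤ φ o := by
      simpa [φ, LinearMap.sum_apply] using sum_nonneg fun k _ => ho.2 k
    rw [← hφ, ← hxo, map_add]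
    linarith
  have hx_ge : ∑ k ∈ A, (rootSums q k : ℝ) + 1 ≤ φ x := by
    refine convexHull_min ?_ (convex_halfSpace_ge φ.isLinear _) hx
    rintro _ ⟨p, hp, rfl⟩
    rw [Set.mem_ofPred_eq, hφ]
    exact_mod_cast h p hp
  linarith

theorem rootVec_mem_corner_iff {ζ : Finset (Fin (N + 1) × Fin (N + 1))}
    (q : Fin (N + 1) × Fin (N + 1)) :
    rootVec N q.1 q.2 ∈ corner ζ ↔ ∃ p ∈ ζ, rootSums p ≤ rootSums q := by
  refine ⟨fun hq => ?_, fun ⟨p, hp, hpq⟩ => rootVec_mem_corner_of_rootSums_le hp hpq⟩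
  by_contra! h
  obtain ⟨A, hA⟩ := (isSignedIndicator_rootSums q).exists_sum_lt_sum
    (S := rootSums '' ζ) (by rintro _ ⟨p, -, rfl⟩; exact isSignedIndicator_rootSums p)
    (by rintro _ ⟨p, hp, rfl⟩; exact h p hp)
  exact rootVec_notMem_corner_of_sum_lt A (fun p hp => hA _ ⟨p, hp, rfl⟩) hq

open scoped Classical in
noncomputable def upClosure (ζ : Finset (Fin (N + 1) × Fin (N + 1))) :
    Finset (Fin (N + 1) × Fin (N + 1)) :=
  univ.filter fun q => ∃ p ∈ ζ, rootSums p ≤ rootSums q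

def IsUpClosed (F : Finset (Fin (N + 1) × Fin (N + 1))) : Prop :=
  ∀ p ∈ F, ∀ q, rootSums p ≤ rootSums q → q ∈ F

lemma mem_upClosure {ζ : Finset (Fin (N + 1) × Fin (N + 1))} {q : Fin (N + 1) × Fin (N + 1)} :
    q ∈ upClosure ζ ↔ ∃ p ∈ ζ, rootSums p ≤ rootSums q := by
  simp [upClosure]

lemma subset_upClosure (ζ : Finset (Fin (N + 1) × Fin (N + 1))) : ζ ⊆ upClosure ζ :=
  fun p hp => mem_upClosure.mpr ⟨p, hp, le_rfl⟩

lemma isUpClosed_upClosure (ζ : Finset (Fin (N + 1) × Fin (N + 1))) :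
    IsUpClosed (upClosure ζ) := by
  intro p hp q hpq
  obtain ⟨p', hp', hp'p⟩ := mem_upClosure.mp hp
  exact mem_upClosure.mpr ⟨p', hp', hp'p.trans hpq⟩

lemma convex_corner (ζ : Finset (Fin (N + 1) × Fin (N + 1))) : Convex ℝ (corner ζ) :=
  (convex_convexHull ℝ _).add convex_Oplus

lemma corner_add_Oplus_subset (ζ : Finset (Fin (N + 1) × Fin (N + 1))) :
    corner ζ + Oplus N ⊆ corner ζ := by
  rw [corner, add_assoc]
  exact Set.add_subset_add_left (Set.add_subset_iff.mpr fun _ ho _ ho' => add_mem_Oplus ho ho')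

lemma corner_upClosure (ζ : Finset (Fin (N + 1) × Fin (N + 1))) :
    corner (upClosure ζ) = corner ζ := by
  refine subset_antisymm ?_ (Set.add_subset_add_right
    (convexHull_mono (Set.image_mono (coe_subset.mpr (subset_upClosure ζ)))))
  refine (Set.add_subset_add_right (convexHull_min ?_ (convex_corner ζ))).trans
    (corner_add_Oplus_subset ζ)
  rintro _ ⟨q, hq, rfl⟩
  exact (rootVec_mem_corner_iff q).mpr (mem_upClosure.mp hq)

lemma rootVec_mem_corner_iff_mem {F : Finset (Fin (N + 1) × Fin (N + 1))} (hF : IsUpClosed F)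
    (q : Fin (N + 1) × Fin (N + 1)) : rootVec N q.1 q.2 ∈ corner F ↔ q ∈ F :=
  (rootVec_mem_corner_iff q).trans ⟨fun ⟨p, hp, hpq⟩ => hF p hp q hpq, fun hq => ⟨q, hq, le_rfl⟩⟩

open scoped Classical in
noncomputable def upClosedFamilies (N : ℕ) : Finset (Finset (Fin (N + 1) × Fin (N + 1))) :=
  univ.filter fun F => F.Nonempty ∧ IsUpClosed F

lemma ncard_corners_eq_card_upClosedFamilies (N : ℕ) :
    {P : Set (Fin (N + 1) → ℝ) | ∃ ζ : Finset (Fin (N + 1) × Fin (N + 1)), ζ.Nonempty ∧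
      P = corner ζ}.ncard = (upClosedFamilies N).card := by
  have himage : {P : Set (Fin (N + 1) → ℝ) | ∃ ζ : Finset (Fin (N + 1) × Fin (N + 1)),
      ζ.Nonempty ∧ P = corner ζ} = corner '' (upClosedFamilies N : Set (Finset _)) := by
    ext P
    simp only [Set.mem_ofPred_eq, Set.mem_image, coe_filter, upClosedFamilies, mem_univ, true_and]
    constructor
    · rintro ⟨ζ, hζ, rfl⟩
      exact ⟨upClosure ζ, ⟨hζ.mono (subset_upClosure ζ), isUpClosed_upClosure ζ⟩,
        corner_upClosure ζ⟩
    · rintro ⟨F, ⟨hF, -⟩, rfl⟩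
      exact ⟨F, hF, rfl⟩
  have hinj : Set.InjOn (corner (N := N)) ↑(upClosedFamilies N) := by
    intro F hF F' hF' h
    simp only [upClosedFamilies, coe_filter, mem_univ, true_and, Set.mem_ofPred_eq] at hF hF'
    ext q
    rw [← rootVec_mem_corner_iff_mem hF.2, ← rootVec_mem_corner_iff_mem hF'.2, h]
  rw [himage, hinj.ncard_image, Set.ncard_coe_finset]

-- `rootSums (i, j)` is the indicator of `[i, j)` if `i ≤ j` and minus that of `[j, i)` otherwise.
lemma rootSums_le_rootSums_iff {p q : Fin (N + 1) × Fin (N + 1)} :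
    rootSums p ≤ rootSums q ↔ (p.2 ≤ p.1 ∧ q.1 ≤ q.2) ∨ (p.1 < p.2 ∧ q.1 ≤ p.1 ∧ p.2 ≤ q.2) ∨
      (q.2 < q.1 ∧ p.2 ≤ q.2 ∧ q.1 ≤ p.1) := by
  have := p.2.isLt; have := q.1.isLt
  constructor
  · intro h
    have h_at (k : ℕ) (hk : k < N) := h ⟨k, hk⟩
    rcases lt_or_ge p.1 p.2 with hp | hp
    · have h₁ := h_at p.1 (by omega)
      have h₂ := h_at (p.2 - 1) (by omega)
      simp only [rootSums] at h₁ h₂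
      split_ifs at h₁ h₂ <;> omega
    rcases lt_or_ge q.2 q.1 with hq | hq
    · have h₁ := h_at q.2 (by omega)
      have h₂ := h_at (q.1 - 1) (by omega)
      simp only [rootSums] at h₁ h₂
      split_ifs at h₁ h₂ <;> omega
    · exact Or.inl ⟨hp, hq⟩
  · rintro (h | h | h) k <;> simp only [rootSums] <;> split_ifs <;> omega

lemma mem_upClosedFamilies {F : Finset (Fin (N + 1) × Fin (N + 1))} :
    F ∈ upClosedFamilies N ↔ F.Nonempty ∧ IsUpClosed F := by
  simp [upClosedFamilies]

end CornerPolyhedra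

section NestClosed
variable {n : ℕ}

/-- A family of intervals `[p.1, p.2)` closed under passing to nonempty subintervals. -/
def IsNestClosed (D : Finset (Fin n × Fin n)) : Prop :=
  ∀ p ∈ D, p.1 < p.2 ∧ ∀ q : Fin n × Fin n, q.1 < q.2 → p.1 ≤ q.1 → q.2 ≤ p.2 → q ∈ D

open scoped Classical in
noncomputable def nestClosedFamilies (n : ℕ) : Finset (Finset (Fin n × Fin n)) :=
  univ.filter IsNestClosed

lemma mem_nestClosedFamilies {D : Finset (Fin n × Fin n)} :
    D ∈ nestClosedFamilies n ↔ IsNestClosed D := by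
  simp [nestClosedFamilies]

def posPairs (n : ℕ) : Finset (Fin n × Fin n) := univ.filter fun p => p.1 < p.2

lemma mem_posPairs {p : Fin n × Fin n} : p ∈ posPairs n ↔ p.1 < p.2 := by
  simp [posPairs]

lemma posPairs_mem_nestClosedFamilies : posPairs n ∈ nestClosedFamilies n :=
  mem_nestClosedFamilies.mpr fun _ hp => ⟨mem_posPairs.mp hp, fun _ hq _ _ => mem_posPairs.mpr hq⟩

lemma IsNestClosed.subset_posPairs {D : Finset (Fin n × Fin n)} (hD : IsNestClosed D) :
    D ⊆ posPairs n :=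
  fun p hp => mem_posPairs.mpr (hD p hp).1

end NestClosed

lemma card_upClosedFamilies_filter_pos (N : ℕ) :
    ((upClosedFamilies N).filter fun F => ∀ p ∈ F, p.1 < p.2).card =
      (nestClosedFamilies (N + 1)).card - 1 := by
  rw [← card_erase_of_mem posPairs_mem_nestClosedFamilies]
  refine card_bij' (fun F _ => posPairs (N + 1) \ F) (fun D _ => posPairs (N + 1) \ D)
    (fun F hF => ?_) (fun D hD => ?_) (fun F hF => ?_) (fun D hD => ?_)
  · simp only [mem_filter, mem_upClosedFamilies] at hF
    obtain ⟨⟨⟨p₀, hp₀⟩, hup⟩, hpos⟩ := hF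
    refine mem_erase.mpr ⟨fun h => ?_, mem_nestClosedFamilies.mpr fun p hp => ?_⟩
    · rw [Finset.sdiff_eq_self_iff_disjoint] at h
      exact disjoint_left.mp h (mem_posPairs.mpr (hpos p₀ hp₀)) hp₀
    · simp only [mem_sdiff, mem_posPairs] at hp ⊢
      exact ⟨hp.1, fun q hq h₁ h₂ =>
        ⟨hq, fun hqF => hp.2 (hup q hqF p (rootSums_le_rootSums_iff.mpr (by omega)))⟩⟩
  · obtain ⟨hne, hD⟩ := mem_erase.mp hD
    have hD := mem_nestClosedFamilies.mp hD
    refine mem_filter.mpr ⟨mem_upClosedFamilies.mpr ⟨?_, fun p hp q hpq => ?_⟩,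
      fun p hp => mem_posPairs.mp (mem_sdiff.mp hp).1⟩
    · exact sdiff_nonempty.mpr fun h => hne (subset_antisymm hD.subset_posPairs h)
    · simp only [mem_sdiff, mem_posPairs] at hp ⊢
      have := rootSums_le_rootSums_iff.mp hpq
      exact ⟨by omega, fun hqD => hp.2 ((hD q hqD).2 p hp.1 (by omega) (by omega))⟩
  · exact Finset.sdiff_sdiff_eq_self fun p hp => mem_posPairs.mpr ((mem_filter.mp hF).2 p hp)
  · exact Finset.sdiff_sdiff_eq_self (mem_nestClosedFamilies.mp (mem_erase.mp hD).2).subset_posPairs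

lemma card_upClosedFamilies_filter_not_pos (N : ℕ) :
    ((upClosedFamilies N).filter fun F => ¬ ∀ p ∈ F, p.1 < p.2).card =
      (nestClosedFamilies (N + 1)).card := by
  refine card_bij' (fun F _ => univ.filter fun p => p.1 < p.2 ∧ p.swap ∈ F)
    (fun D _ => univ.filter fun p => p.1 ≤ p.2 ∨ p.swap ∈ D)
    (fun F hF => ?_) (fun D hD => ?_) (fun F hF => ?_) (fun D hD => ?_)
  · have hup := (mem_upClosedFamilies.mp (mem_filter.mp hF).1).2
    refine mem_nestClosedFamilies.mpr fun p hp => ?_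
    simp only [mem_filter, mem_univ, true_and] at hp ⊢
    refine ⟨hp.1, fun q hq h₁ h₂ => ⟨hq, hup _ hp.2 _ (rootSums_le_rootSums_iff.mpr ?_)⟩⟩
    simp only [Prod.fst_swap, Prod.snd_swap]
    omega
  · have hD := mem_nestClosedFamilies.mp hD
    have h₀ : ((0, 0) : Fin (N + 1) × Fin (N + 1)) ∈
        univ.filter fun p => p.1 ≤ p.2 ∨ p.swap ∈ D := by simp
    refine mem_filter.mpr ⟨mem_upClosedFamilies.mpr ⟨⟨_, h₀⟩, fun p hp q hpq => ?_⟩,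
      fun h => (h _ h₀).false⟩
    simp only [mem_filter, mem_univ, true_and] at hp ⊢
    rcases le_or_gt q.1 q.2 with hq | hq
    · exact Or.inl hq
    have := rootSums_le_rootSums_iff.mp hpq
    have hp : p.swap ∈ D := hp.resolve_left (by omega)
    exact Or.inr ((hD _ hp).2 q.swap hq (by simp only [Prod.fst_swap]; omega)
      (by simp only [Prod.snd_swap]; omega))
  · obtain ⟨hF, hnpos⟩ := mem_filter.mp hF
    obtain ⟨p₀, hp₀, hp₀'⟩ : ∃ p₀ ∈ F, p₀.2 ≤ p₀.1 := by simpa using hnpos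
    ext p
    simp only [mem_filter, mem_univ, true_and, Prod.fst_swap, Prod.snd_swap, Prod.swap_swap]
    constructor
    · rintro (hp | ⟨-, hp⟩)
      · exact (mem_upClosedFamilies.mp hF).2 p₀ hp₀ p
          (rootSums_le_rootSums_iff.mpr (Or.inl ⟨hp₀', hp⟩))
      · exact hp
    · intro hp
      rcases le_or_gt p.1 p.2 with h | h
      · exact Or.inl h
      · exact Or.inr ⟨h, hp⟩
  · ext p
    simp only [mem_filter, mem_univ, true_and, Prod.fst_swap, Prod.snd_swap, Prod.swap_swap]
    have := (mem_nestClosedFamilies.mp hD) p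
    constructor
    · rintro ⟨h, h' | h'⟩
      · exact absurd h' (not_le.mpr h)
      · exact h'
    · intro hp
      exact ⟨(this hp).1, Or.inr hp⟩

lemma card_upClosedFamilies (N : ℕ) :
    (upClosedFamilies N).card = 2 * (nestClosedFamilies (N + 1)).card - 1 := by
  rw [← card_filter_add_card_filter_not (fun F => ∀ p ∈ F, p.1 < p.2),
    card_upClosedFamilies_filter_pos, card_upClosedFamilies_filter_not_pos]
  have := card_pos.mpr ⟨_, posPairs_mem_nestClosedFamilies (n := N + 1)⟩
  omega

section MonoInfl
variable {n : ℕ}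

def monoInflMaps (n : ℕ) : Finset (Fin n → ℕ) :=
  (Fintype.piFinset fun _ => range n).filter fun m => Monotone m ∧ ∀ i : Fin n, (i : ℕ) ≤ m i

lemma mem_monoInflMaps {m : Fin n → ℕ} :
    m ∈ monoInflMaps n ↔ (∀ i, m i < n) ∧ Monotone m ∧ ∀ i : Fin n, (i : ℕ) ≤ m i := by
  simp [monoInflMaps]

def nestFamilyOf (m : Fin n → ℕ) : Finset (Fin n × Fin n) :=
  univ.filter fun p => p.1 < p.2 ∧ (p.2 : ℕ) ≤ m p.1

lemma mem_nestFamilyOf {m : Fin n → ℕ} {p : Fin n × Fin n} :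
    p ∈ nestFamilyOf m ↔ p.1 < p.2 ∧ (p.2 : ℕ) ≤ m p.1 := by
  simp [nestFamilyOf]

lemma isNestClosed_nestFamilyOf {m : Fin n → ℕ} (hm : Monotone m) :
    IsNestClosed (nestFamilyOf m) := by
  intro p hp
  rw [mem_nestFamilyOf] at hp
  refine ⟨hp.1, fun q hq h₁ h₂ => mem_nestFamilyOf.mpr ⟨hq, ?_⟩⟩
  have := hm h₁
  rw [Fin.le_def] at h₂
  omega

lemma le_of_nestFamilyOf_subset {m m' : Fin n → ℕ} (hm : ∀ i, m i < n)
    (hm' : ∀ i : Fin n, (i : ℕ) ≤ m' i) (h : nestFamilyOf m ⊆ nestFamilyOf m') (i : Fin n) :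
    m i ≤ m' i := by
  rcases le_or_gt (m i) i with hi | hi
  · exact hi.trans (hm' i)
  · have hmem : ((i, ⟨m i, hm i⟩) : Fin n × Fin n) ∈ nestFamilyOf m :=
      mem_nestFamilyOf.mpr ⟨hi, le_rfl⟩
    exact (mem_nestFamilyOf.mp (h hmem)).2

def rightReach (D : Finset (Fin n × Fin n)) (i : Fin n) : ℕ :=
  (D.filter (·.1 = i)).sup (fun p => (p.2 : ℕ)) ⊔ i

lemma le_rightReach {D : Finset (Fin n × Fin n)} {p : Fin n × Fin n} (hp : p ∈ D) :
    (p.2 : ℕ) ≤ rightReach D p.1 :=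
  le_sup_of_le_left (le_sup (s := D.filter (·.1 = p.1)) (f := fun p => (p.2 : ℕ))
    (mem_filter.mpr ⟨hp, rfl⟩))

lemma IsNestClosed.rightReach_mem_monoInflMaps {D : Finset (Fin n × Fin n)}
    (hD : IsNestClosed D) : rightReach D ∈ monoInflMaps n := by
  refine mem_monoInflMaps.mpr ⟨fun i => ?_, fun i i' hii' => ?_, fun i => le_sup_right⟩
  · exact max_lt ((Finset.sup_lt_iff (by simpa using i.pos)).mpr fun p _ => p.2.isLt) i.isLt
  · refine max_le (Finset.sup_le fun p hp => ?_) (le_sup_of_le_right (by simpa using hii'))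
    obtain ⟨hpD, rfl⟩ := mem_filter.mp hp
    rcases le_or_gt p.2 i' with h | h
    · exact le_sup_of_le_right (by simpa using h)
    · exact le_rightReach (p := (i', p.2)) ((hD p hpD).2 (i', p.2) h hii' le_rfl)

lemma IsNestClosed.nestFamilyOf_rightReach {D : Finset (Fin n × Fin n)}
    (hD : IsNestClosed D) : nestFamilyOf (rightReach D) = D := by
  ext p
  rw [mem_nestFamilyOf]
  refine ⟨fun ⟨hp, hpD⟩ => ?_, fun hpD => ⟨(hD p hpD).1, le_rightReach hpD⟩⟩
  have hp' : (p.1 : ℕ) < p.2 := hp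
  have hpos : ⊥ < (p.2 : ℕ) := (Nat.zero_le _).trans_lt hp'
  obtain ⟨r, hr, hpr⟩ :=
    (Finset.le_sup_iff hpos).mp ((le_max_iff.mp hpD).resolve_right hp'.not_ge)
  obtain ⟨hrD, hr₁⟩ := mem_filter.mp hr
  exact (hD r hrD).2 p hp hr₁.le (Fin.le_def.mpr hpr)

lemma card_nestClosedFamilies (n : ℕ) :
    (nestClosedFamilies n).card = (monoInflMaps n).card := by
  refine (card_bij (fun m _ => nestFamilyOf m) (fun m hm => ?_) (fun m hm m' hm' h => ?_)
    (fun D hD => ?_)).symm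
  · exact mem_nestClosedFamilies.mpr (isNestClosed_nestFamilyOf (mem_monoInflMaps.mp hm).2.1)
  · rw [mem_monoInflMaps] at hm hm'
    exact funext fun i => le_antisymm (le_of_nestFamilyOf_subset hm.1 hm'.2.2 h.subset i)
      (le_of_nestFamilyOf_subset hm'.1 hm.2.2 h.symm.subset i)
  · have hD := mem_nestClosedFamilies.mp hD
    exact ⟨_, hD.rightReach_mem_monoInflMaps, hD.nestFamilyOf_rightReach⟩

end MonoInfl

section Catalan
variable {n : ℕ}

lemma card_monoInflMaps_zero : (monoInflMaps 0).card = 1 := by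
  rw [card_eq_one]
  exact ⟨Fin.elim0, eq_singleton_iff_unique_mem.mpr ⟨mem_monoInflMaps.mpr
    ⟨fun i => i.elim0, fun i => i.elim0, fun i => i.elim0⟩, fun m _ => funext fun i => i.elim0⟩⟩

-- The disjunct only makes `Fin.find` applicable to every `m`: on `monoInflMaps (n + 1)` the
-- last point is fixed anyway.
def firstFixedPoint (m : Fin (n + 1) → ℕ) : Fin (n + 1) :=
  Fin.find (fun i => m i ≤ i ∨ i = Fin.last n) ⟨Fin.last n, Or.inr rfl⟩

lemma firstFixedPoint_eq_iff {m : Fin (n + 1) → ℕ} (hm : m ∈ monoInflMaps (n + 1))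
    {j : Fin (n + 1)} :
    firstFixedPoint m = j ↔ m j = j ∧ ∀ i < j, (i : ℕ) < m i := by
  obtain ⟨hlt, -, hinfl⟩ := mem_monoInflMaps.mp hm
  rw [firstFixedPoint, Fin.find_eq_iff]
  have hi_lt_last {i : Fin (n + 1)} (hi : i < j) : i ≠ Fin.last n := (hi.trans_le j.le_last).ne
  refine and_congr ⟨fun h => ?_, fun h => Or.inl h.le⟩ (forall₂_congr fun i hi => ?_)
  · rcases h with h | rfl
    · exact le_antisymm h (hinfl j)
    · have := hlt (Fin.last n); have := hinfl (Fin.last n)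
      simp only [Fin.val_last] at *
      omega
  · simp [hi_lt_last hi]

def leftPart (j : Fin (n + 1)) (m : Fin (n + 1) → ℕ) (l : Fin j) : ℕ :=
  m ⟨l, l.isLt.trans j.isLt⟩ - 1

def rightPart (j : Fin (n + 1)) (m : Fin (n + 1) → ℕ) (l : Fin (n - j)) : ℕ :=
  m ⟨j + 1 + l, by have := l.isLt; omega⟩ - (j + 1)

def glue (j : Fin (n + 1)) (u : Fin j → ℕ) (v : Fin (n - j) → ℕ) (i : Fin (n + 1)) : ℕ :=
  if h : (i : ℕ) < j then u ⟨i, h⟩ + 1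
  else if h' : (i : ℕ) = j then j
  else v ⟨i - (j + 1), by have := i.isLt; omega⟩ + (j + 1)

lemma glue_of_lt {j i : Fin (n + 1)} (u : Fin j → ℕ) (v : Fin (n - j) → ℕ) (h : (i : ℕ) < j) :
    glue j u v i = u ⟨i, h⟩ + 1 :=
  dif_pos h

lemma glue_self (j : Fin (n + 1)) (u : Fin j → ℕ) (v : Fin (n - j) → ℕ) : glue j u v j = j := by
  simp [glue]

lemma glue_of_gt {j i : Fin (n + 1)} (u : Fin j → ℕ) (v : Fin (n - j) → ℕ) (h : (j : ℕ) < i) :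
    glue j u v i = v ⟨i - (j + 1), by have := i.isLt; omega⟩ + (j + 1) := by
  rw [glue, dif_neg (by omega), dif_neg (by omega)]

lemma leftPart_glue (j : Fin (n + 1)) (u : Fin j → ℕ) (v : Fin (n - j) → ℕ) :
    leftPart j (glue j u v) = u :=
  funext fun l => by simp [leftPart, glue_of_lt u v (i := ⟨l, _⟩) l.isLt]

lemma rightPart_glue (j : Fin (n + 1)) (u : Fin j → ℕ) (v : Fin (n - j) → ℕ) :
    rightPart j (glue j u v) = v :=
  funext fun l => by
    rw [rightPart, glue_of_gt u v (by simp only; omega)]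
    simp

lemma rightPart_mem_monoInflMaps {m : Fin (n + 1) → ℕ} (hm : m ∈ monoInflMaps (n + 1))
    (j : Fin (n + 1)) : rightPart j m ∈ monoInflMaps (n - j) := by
  obtain ⟨hlt, hmono, hinfl⟩ := mem_monoInflMaps.mp hm
  refine mem_monoInflMaps.mpr ⟨fun l => ?_, fun l l' hll' => ?_, fun l => ?_⟩ <;>
    simp only [rightPart]
  · have := hlt ⟨j + 1 + l, by omega⟩; have := l.isLt; omega
  · exact Nat.sub_le_sub_right (hmono (Fin.mk_le_mk.mpr (Nat.add_le_add_left hll' _))) _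
  · have := hinfl ⟨j + 1 + l, by omega⟩
    simp only at this
    omega

lemma leftPart_mem_monoInflMaps {m : Fin (n + 1) → ℕ} (hm : m ∈ monoInflMaps (n + 1))
    {j : Fin (n + 1)} (hj : firstFixedPoint m = j) : leftPart j m ∈ monoInflMaps j := by
  obtain ⟨hfix, hbelow⟩ := (firstFixedPoint_eq_iff hm).mp hj
  obtain ⟨-, hmono, -⟩ := mem_monoInflMaps.mp hm
  refine mem_monoInflMaps.mpr ⟨fun l => ?_, fun l l' hll' => ?_, fun l => ?_⟩ <;>
    simp only [leftPart]
  · have hl : (⟨l, l.isLt.trans j.isLt⟩ : Fin (n + 1)) < j := l.isLt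
    have := hmono hl.le
    have := hbelow _ hl
    simp only at this
    omega
  · exact Nat.sub_le_sub_right (hmono (Fin.mk_le_mk.mpr hll')) _
  · have := hbelow ⟨l, l.isLt.trans j.isLt⟩ l.isLt
    simp only at this
    omega

lemma glue_mem_monoInflMaps {j : Fin (n + 1)} {u : Fin j → ℕ} {v : Fin (n - j) → ℕ}
    (hu : u ∈ monoInflMaps j) (hv : v ∈ monoInflMaps (n - j)) :
    glue j u v ∈ monoInflMaps (n + 1) := by
  obtain ⟨hult, humono, huinfl⟩ := mem_monoInflMaps.mp hu
  obtain ⟨hvlt, hvmono, hvinfl⟩ := mem_monoInflMaps.mp hv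
  have hinfl (i : Fin (n + 1)) : (i : ℕ) ≤ glue j u v i := by
    rcases lt_trichotomy (i : ℕ) j with h | h | h
    · rw [glue_of_lt u v h]; have := huinfl ⟨i, h⟩; simp only at this; omega
    · rw [show i = j from Fin.ext h, glue_self]
    · rw [glue_of_gt u v h]; have := hvinfl ⟨i - (j + 1), by omega⟩; simp only at this; omega
  refine mem_monoInflMaps.mpr ⟨fun i => ?_, fun i i' hii' => ?_, hinfl⟩
  · rcases lt_trichotomy (i : ℕ) j with h | h | h
    · rw [glue_of_lt u v h]; have := hult ⟨i, h⟩; omega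
    · rw [show i = j from Fin.ext h, glue_self]; omega
    · rw [glue_of_gt u v h]; have := hvlt ⟨i - (j + 1), by omega⟩; omega
  · have hii' : (i : ℕ) ≤ i' := hii'
    rcases lt_or_ge (i : ℕ) j with h | h
    · rw [glue_of_lt u v h]
      rcases lt_or_ge (i' : ℕ) j with h' | h'
      · rw [glue_of_lt u v h']
        exact Nat.add_le_add_right (humono (Fin.mk_le_mk.mpr hii')) 1
      · have := hult ⟨i, h⟩; have := hinfl i'; omega
    rcases h.eq_or_lt' with h | h
    · rw [show i = j from Fin.ext h, glue_self]; have := hinfl i'; omega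
    · rw [glue_of_gt u v h, glue_of_gt u v (by omega)]
      exact Nat.add_le_add_right (hvmono (Fin.mk_le_mk.mpr (by omega))) _

lemma firstFixedPoint_glue {j : Fin (n + 1)} {u : Fin j → ℕ} {v : Fin (n - j) → ℕ}
    (hu : u ∈ monoInflMaps j) (hv : v ∈ monoInflMaps (n - j)) :
    firstFixedPoint (glue j u v) = j := by
  refine (firstFixedPoint_eq_iff (glue_mem_monoInflMaps hu hv)).mpr
    ⟨glue_self j u v, fun i hi => ?_⟩
  rw [glue_of_lt u v hi]
  have := (mem_monoInflMaps.mp hu).2.2 ⟨i, hi⟩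
  simp only at this
  omega

lemma glue_leftPart_rightPart {m : Fin (n + 1) → ℕ} (hm : m ∈ monoInflMaps (n + 1))
    {j : Fin (n + 1)} (hj : firstFixedPoint m = j) :
    glue j (leftPart j m) (rightPart j m) = m := by
  obtain ⟨hfix, hbelow⟩ := (firstFixedPoint_eq_iff hm).mp hj
  obtain ⟨-, -, hinfl⟩ := mem_monoInflMaps.mp hm
  funext i
  rcases lt_trichotomy (i : ℕ) j with h | h | h
  · rw [glue_of_lt _ _ h, leftPart]
    have := hbelow i h
    simp only [Fin.eta]
    omega
  · rw [show i = j from Fin.ext h, glue_self, hfix]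
  · rw [glue_of_gt _ _ h, rightPart]
    have := hinfl i
    have hi : (⟨j + 1 + (i - (j + 1)), by omega⟩ : Fin (n + 1)) = i := Fin.ext (by simp only; omega)
    simp only [hi]
    omega

lemma card_filter_firstFixedPoint (j : Fin (n + 1)) :
    ((monoInflMaps (n + 1)).filter (firstFixedPoint · = j)).card =
      (monoInflMaps j).card * (monoInflMaps (n - j)).card := by
  rw [← card_product]
  refine card_bij' (fun m _ => (leftPart j m, rightPart j m)) (fun uv _ => glue j uv.1 uv.2)
    (fun m hm => ?_) (fun uv huv => ?_) (fun m hm => ?_) (fun uv _ => ?_)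
  · obtain ⟨hm, hj⟩ := mem_filter.mp hm
    exact mem_product.mpr ⟨leftPart_mem_monoInflMaps hm hj, rightPart_mem_monoInflMaps hm j⟩
  · obtain ⟨hu, hv⟩ := mem_product.mp huv
    exact mem_filter.mpr ⟨glue_mem_monoInflMaps hu hv, firstFixedPoint_glue hu hv⟩
  · obtain ⟨hm, hj⟩ := mem_filter.mp hm
    exact glue_leftPart_rightPart hm hj
  · exact Prod.ext (leftPart_glue j _ _) (rightPart_glue j _ _)

lemma card_monoInflMaps_succ (n : ℕ) :
    (monoInflMaps (n + 1)).card =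
      ∑ j : Fin (n + 1), (monoInflMaps j).card * (monoInflMaps (n - j)).card := by
  rw [card_eq_sum_card_fiberwise (f := firstFixedPoint) (t := univ) fun _ _ => mem_univ _]
  exact sum_congr rfl fun j _ => card_filter_firstFixedPoint j

theorem card_monoInflMaps (n : ℕ) : (monoInflMaps n).card = catalan n := by
  induction n using Nat.strong_induction_on with
  | _ n ih =>
    rcases n with _ | n
    · rw [card_monoInflMaps_zero, catalan_zero]
    · rw [card_monoInflMaps_succ, catalan_succ]
      exact sum_congr rfl fun j _ => by rw [ih j (by omega), ih (n - j) (by omega)]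

end Catalan

theorem stmt11 (N : ℕ) :
    Set.ncard {P : Set (Fin (N + 1) → ℝ) |
      ∃ ζ : Finset (Fin (N + 1) × Fin (N + 1)), ζ.Nonempty ∧
        P = convexHull ℝ ((fun p : Fin (N + 1) × Fin (N + 1) => rootVec N p.1 p.2) ''
              (ζ : Set (Fin (N + 1) × Fin (N + 1)))) + Oplus N} =
      2 * catalan (N + 1) - 1 :=
  calc _ = (upClosedFamilies N).card := ncard_corners_eq_card_upClosedFamilies N
    _ = 2 * (nestClosedFamilies (N + 1)).card - 1 := card_upClosedFamilies N
    _ = 2 * catalan (N + 1) - 1 := by rw [card_nestClosedFamilies, card_monoInflMaps]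
end

section
/- A nonzero linear endomorphism T of k^{N+1} (over an algebraically closed field, considered up to scalar) admits a flag of Type III if and only if T is nilpotent. -/
theorem stmt14 {k : Type*} [Field k] [IsAlgClosed k] (N : ℕ)
    (T : Module.End k (Fin (N + 1) → k)) (hT : T ≠ 0) :
    (∃ γ : ℕ, 1 ≤ γ ∧ γ ≤ N ∧
      ∃ H : ℕ → Submodule k (Fin (N + 1) → k),
        H 0 = ⊥ ∧ H (γ + 1) = ⊤ ∧ (∀ a b, a < b → b ≤ γ + 1 → H a < H b) ∧
        -- the flag is of Type III: its Hessenberg function satisfies h(t) = t - 1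
        (∀ t, 1 ≤ t → t ≤ γ + 1 →
          sInf {j | j ≤ γ + 1 ∧ Submodule.map T (H t) ≤ H j} = t - 1)) ↔
    IsNilpotent T := by
  constructor
  · rintro ⟨γ, hγ1, hγN, H, h0, htop, hstrict, hhess⟩
    -- step: map T (H t) ≤ H (t-1)
    have hstep : ∀ t, 1 ≤ t → t ≤ γ + 1 → Submodule.map T (H t) ≤ H (t - 1) := by
      intro t ht1 ht2
      have hne : (γ + 1) ∈ {j | j ≤ γ + 1 ∧ Submodule.map T (H t) ≤ H j} :=
        ⟨le_refl _, by rw [htop]; exact le_top⟩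
      have hmem := Nat.sInf_mem ⟨_, hne⟩
      rw [hhess t ht1 ht2] at hmem
      exact hmem.2
    have key : ∀ s, s ≤ γ + 1 → Submodule.map (T ^ s) (H (γ + 1)) ≤ H (γ + 1 - s) := by
      intro s
      induction s with
      | zero => simp [Module.End.one_eq_id]
      | succ s ih =>
        intro hs
        have hs' : s ≤ γ + 1 := Nat.le_of_succ_le hs
        rw [pow_succ, Module.End.mul_eq_comp, Submodule.map_comp]
        calc Submodule.map (T ^ s) (Submodule.map T (H (γ + 1)))
            ≤ Submodule.map (T ^ s) (H γ) := by
              apply Submodule.map_mono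
              have := hstep (γ + 1) (by omega) le_rfl
              simpa using this
          _ ≤ _ := by
              -- map T^s (H γ) ≤ H (γ - s)
              have h2 : ∀ s, s ≤ γ → Submodule.map (T ^ s) (H γ) ≤ H (γ - s) := by
                intro s
                induction s with
                | zero => simp [Module.End.one_eq_id]
                | succ s ih2 =>
                  intro hs
                  rw [pow_succ', Module.End.mul_eq_comp, Submodule.map_comp]
                  calc Submodule.map T (Submodule.map (T ^ s) (H γ))
                      ≤ Submodule.map T (H (γ - s)) := Submodule.map_mono (ih2 (by omega))
                    _ ≤ H (γ - s - 1) := hstep (γ - s) (by omega) (by omega)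
                    _ = H (γ - (s + 1)) := by rw [Nat.sub_sub]
              have := h2 s (by omega)
              simpa [Nat.succ_sub_one, show γ + 1 - (s+1) = γ - s by omega] using this
    refine ⟨γ + 1, LinearMap.ext fun x => ?_⟩
    have := key (γ + 1) le_rfl
    rw [htop, Nat.sub_self, h0] at this
    simpa using this ⟨x, trivial, rfl⟩
  · rintro hnil
    have hex : ∃ n, T ^ n = 0 := hnil
    classical
    set m := Nat.find hex with hm
    have hTm : T ^ m = 0 := Nat.find_spec hex
    have hm2 : 2 ≤ m := by
      by_contra h
      interval_cases m
      · rw [pow_zero] at hTm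
        exact one_ne_zero hTm
      · rw [pow_one] at hTm
        exact hT hTm
    -- strict chain of kernels
    have hmin : ∀ t, t < m → T ^ t ≠ 0 := fun t ht => Nat.find_min hex ht
    have hmono : ∀ a b : ℕ, a ≤ b →
        LinearMap.ker (T ^ a) ≤ LinearMap.ker (T ^ b) := by
      intro a b hab x hx
      have : T ^ b = T ^ (b - a) * T ^ a := by
        rw [← pow_add]; congr 1; omega
      simp only [LinearMap.mem_ker] at hx ⊢
      rw [this, Module.End.mul_apply, hx, map_zero]
    have hstrict : ∀ t, t < m →
        LinearMap.ker (T ^ t) < LinearMap.ker (T ^ (t + 1)) := by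
      intro t ht
      rcases lt_or_eq_of_le (hmono t (t+1) (by omega)) with h | h
      · exact h
      · exfalso
        have := Module.End.ker_pow_constant h (m - t)
        rw [show t + (m - t) = m by omega, hTm] at this
        apply hmin t ht
        have hker : LinearMap.ker (T ^ t) = ⊤ := by rw [this]; simp
        exact LinearMap.ker_eq_top.mp hker
    -- dimension bound
    have hdim : ∀ t, t ≤ m → t ≤ Module.finrank k (LinearMap.ker (T ^ t)) := by
      intro t
      induction t with
      | zero => simp
      | succ t ih =>
        intro ht
        have h1 := ih (by omega)
        have h2 := Submodule.finrank_lt_finrank_of_lt (hstrict t (by omega))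
        omega
    have hmN : m ≤ N + 1 := by
      have := hdim m le_rfl
      have h2 : Module.finrank k (LinearMap.ker (T ^ m)) ≤
          Module.finrank k (Fin (N + 1) → k) := Submodule.finrank_le _
      simp [Module.finrank_fin_fun] at h2
      omega
    refine ⟨m - 1, by omega, by omega, fun t => LinearMap.ker (T ^ t),
      by simp [Module.End.one_eq_id], ?_, ?_, ?_⟩
    · show LinearMap.ker (T ^ (m - 1 + 1)) = ⊤
      rw [show m - 1 + 1 = m by omega, hTm]
      exact LinearMap.ker_zero
    · intro a b hab hb
      rw [show m - 1 + 1 = m by omega] at hb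
      have : ∀ c d, c < d → d ≤ m → LinearMap.ker (T ^ c) < LinearMap.ker (T ^ d) := by
        intro c d hcd hd
        calc LinearMap.ker (T ^ c) < LinearMap.ker (T ^ (c + 1)) := hstrict c (by omega)
          _ ≤ LinearMap.ker (T ^ d) := hmono _ _ (by omega)
      exact this a b hab hb
    · intro t ht1 ht2
      rw [show m - 1 + 1 = m by omega] at ht2 ⊢
      have hmem : t - 1 ∈ {j | j ≤ m ∧
          Submodule.map T (LinearMap.ker (T ^ t)) ≤ LinearMap.ker (T ^ j)} := by
        refine ⟨by omega, ?_⟩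
        rintro x ⟨y, hy, rfl⟩
        simp only [LinearMap.mem_ker] at hy ⊢
        rw [← Module.End.mul_apply, ← pow_succ, show t - 1 + 1 = t by omega]
        exact hy
      refine le_antisymm (Nat.sInf_le hmem) ?_
      by_contra h
      push_neg at h
      have hmem2 := Nat.sInf_mem (⟨_, hmem⟩ : Set.Nonempty _)
      set j := sInf {j | j ≤ m ∧
          Submodule.map T (LinearMap.ker (T ^ t)) ≤ LinearMap.ker (T ^ j)}
      have hj : j < t - 1 := h
      have hle : LinearMap.ker (T ^ t) ≤ LinearMap.ker (T ^ (j + 1)) := by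
        intro y hy
        have : T y ∈ LinearMap.ker (T ^ j) := hmem2.2 ⟨y, hy, rfl⟩
        simp only [LinearMap.mem_ker] at this ⊢
        rw [pow_succ, Module.End.mul_apply]
        exact this
      have hlt : LinearMap.ker (T ^ (j + 1)) < LinearMap.ker (T ^ t) := by
        calc LinearMap.ker (T ^ (j + 1)) < LinearMap.ker (T ^ (j + 2)) :=
            hstrict _ (by omega)
          _ ≤ LinearMap.ker (T ^ t) := hmono _ _ (by omega)
      exact absurd hle (not_le_of_gt hlt)
end
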